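/- arXiv:2506.07521 — 2 statements merged into one kernel-verified Lean document; each statement's English description precedes it below -/
import Mathlib

section
/- Let q ∈ [1,3]. There exists a constant C = C(q) > 0 such that for all real x, y: | |x+y|^q − |x|^q − |y|^q − q·x·y·(|x|^{q−2} + |y|^{q−2}) | ≤ C·|x|·|y|^{q−1} whenever |x| ≥ |y|, and ≤ C·|x|^{q−1}·|y| whenever |x| ≤ |y|. -/
open Real Set

/-- Mean value bound for `t ↦ t ^ r` on `[u, v] ⊆ [0, ∞)`. -/
lemma bn_rpow_mvt {r : ℝ} (hr : 1 ≤ r) {u v : ℝ} (hu : 0 ≤ u) (huv : u ≤ v) :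
    |v ^ r - u ^ r| ≤ r * v ^ (r - 1) * (v - u) := by
  have hv : 0 ≤ v := hu.trans huv
  have h := Convex.norm_image_sub_le_of_norm_hasDerivWithin_le
    (f := fun t : ℝ => t ^ r) (f' := fun t : ℝ => r * t ^ (r - 1))
    (s := Icc u v) (C := r * v ^ (r - 1))
    (fun t _ => (Real.hasDerivAt_rpow_const (Or.inr hr)).hasDerivWithinAt)
    (fun t ht => by
      have ht0 : 0 ≤ t := hu.trans ht.1
      have h1 : t ^ (r - 1) ≤ v ^ (r - 1) :=
        Real.rpow_le_rpow ht0 ht.2 (by linarith)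
      have h2 : (0:ℝ) ≤ t ^ (r - 1) := Real.rpow_nonneg ht0 _
      rw [Real.norm_eq_abs, abs_mul, abs_of_nonneg (by linarith : (0:ℝ) ≤ r),
        abs_of_nonneg h2]
      exact mul_le_mul_of_nonneg_left h1 (by linarith))
    (convex_Icc u v) (left_mem_Icc.2 huv) (right_mem_Icc.2 huv)
  simpa [Real.norm_eq_abs, abs_of_nonneg (sub_nonneg.2 huv)] using h

/-- Symmetric version with `max`. -/
lemma bn_rpow_lip {r : ℝ} (hr : 1 ≤ r) {u v : ℝ} (hu : 0 ≤ u) (hv : 0 ≤ v) :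
    |v ^ r - u ^ r| ≤ r * (max u v) ^ (r - 1) * |v - u| := by
  rcases le_total u v with h | h
  · rw [max_eq_right h, abs_of_nonneg (sub_nonneg.2 h)]
    exact bn_rpow_mvt hr hu h
  · rw [max_eq_left h, abs_sub_comm, abs_sub_comm v u,
      abs_of_nonneg (sub_nonneg.2 h)]
    exact bn_rpow_mvt hr hv h

/-- Lipschitz-type bound for `t ↦ t * |t| ^ p` for `0 ≤ p ≤ 1`. -/
lemma bn_g_lip {p : ℝ} (hp0 : 0 ≤ p) (hp1 : p ≤ 1) (a b : ℝ) :
    |a * |a| ^ p - b * |b| ^ p| ≤ (p + 1) * (max |a| |b|) ^ p * |a - b| := by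
  -- helper for 0 ≤ b ≤ a
  have key1 : ∀ a b : ℝ, 0 ≤ b → b ≤ a →
      |a * |a| ^ p - b * |b| ^ p| ≤ (p + 1) * (max |a| |b|) ^ p * |a - b| := by
    intro a b hb hba
    have ha : 0 ≤ a := hb.trans hba
    rw [abs_of_nonneg ha, abs_of_nonneg hb, max_eq_left hba,
      abs_of_nonneg (sub_nonneg.2 hba)]
    have e1 : a * a ^ p = a ^ (p + 1) := by
      rw [Real.rpow_add' ha (by linarith), Real.rpow_one]; ring
    have e2 : b * b ^ p = b ^ (p + 1) := by
      rw [Real.rpow_add' hb (by linarith), Real.rpow_one]; ring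
    have h := bn_rpow_mvt (r := p + 1) (by linarith) hb hba
    rw [e1, e2]
    calc |a ^ (p+1) - b ^ (p+1)| ≤ (p+1) * a ^ ((p+1) - 1) * (a - b) := h
      _ = (p+1) * a ^ p * (a - b) := by norm_num
  -- helper for b ≤ 0 ≤ a
  have key2 : ∀ a b : ℝ, b ≤ 0 → 0 ≤ a →
      |a * |a| ^ p - b * |b| ^ p| ≤ (p + 1) * (max |a| |b|) ^ p * |a - b| := by
    intro a b hb ha
    rw [abs_of_nonneg ha, abs_of_nonpos hb]
    have hM1 : a ≤ max a (-b) := le_max_left _ _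
    have hM2 : -b ≤ max a (-b) := le_max_right _ _
    have hM0 : (0:ℝ) ≤ max a (-b) := le_trans ha hM1
    have h1 : a ^ p ≤ (max a (-b)) ^ p := Real.rpow_le_rpow ha hM1 hp0
    have h2 : (-b) ^ p ≤ (max a (-b)) ^ p :=
      Real.rpow_le_rpow (by linarith) hM2 hp0
    have hab : 0 ≤ a - b := by linarith
    rw [abs_of_nonneg hab]
    have hg : a * a ^ p - b * (-b) ^ p
        ≤ (max a (-b)) ^ p * (a - b) := by
      have t1 : a * a ^ p ≤ a * (max a (-b)) ^ p :=
        mul_le_mul_of_nonneg_left h1 ha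
      have t2 : (-b) * (-b) ^ p ≤ (-b) * (max a (-b)) ^ p :=
        mul_le_mul_of_nonneg_left h2 (by linarith)
      nlinarith [Real.rpow_nonneg (show (0:ℝ) ≤ -b by linarith) p,
        Real.rpow_nonneg ha p]
    have hg0 : 0 ≤ a * a ^ p - b * (-b) ^ p := by
      nlinarith [Real.rpow_nonneg (show (0:ℝ) ≤ -b by linarith) p,
        Real.rpow_nonneg ha p, mul_nonneg ha (Real.rpow_nonneg ha p),
        mul_nonneg (show (0:ℝ) ≤ -b by linarith)
          (Real.rpow_nonneg (show (0:ℝ) ≤ -b by linarith) p)]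
    rw [abs_of_nonneg hg0]
    have hMp : 0 ≤ (max a (-b)) ^ p := Real.rpow_nonneg hM0 p
    nlinarith [mul_nonneg hMp hab]
  -- symmetry in (a, b)
  have hsymm : ∀ a b : ℝ,
      |a * |a| ^ p - b * |b| ^ p| ≤ (p + 1) * (max |a| |b|) ^ p * |a - b| →
      |b * |b| ^ p - a * |a| ^ p| ≤ (p + 1) * (max |b| |a|) ^ p * |b - a| := by
    intro a b h
    rwa [abs_sub_comm, max_comm, abs_sub_comm b a]
  -- negation
  have hneg : ∀ a b : ℝ,
      |(-a) * |(-a)| ^ p - (-b) * |(-b)| ^ p|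
        ≤ (p + 1) * (max |(-a)| |(-b)|) ^ p * |(-a) - (-b)| →
      |a * |a| ^ p - b * |b| ^ p| ≤ (p + 1) * (max |a| |b|) ^ p * |a - b| := by
    intro a b h
    rw [abs_neg, abs_neg] at h
    have e : |(-a) * |a| ^ p - (-b) * |b| ^ p| = |a * |a| ^ p - b * |b| ^ p| := by
      rw [show (-a) * |a| ^ p - (-b) * |b| ^ p = -(a * |a| ^ p - b * |b| ^ p) by ring,
        abs_neg]
    have e2 : |(-a) - (-b)| = |a - b| := by
      rw [show (-a) - (-b) = -(a - b) by ring, abs_neg]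
    rwa [e, e2] at h
  rcases le_total 0 a with ha | ha <;> rcases le_total 0 b with hb | hb
  · rcases le_total b a with h | h
    · exact key1 a b hb h
    · exact hsymm b a (key1 b a ha h)
  · exact key2 a b hb ha
  · exact hsymm b a (key2 b a ha hb)
  · apply hneg
    rcases le_total (-b) (-a) with h | h
    · exact key1 (-a) (-b) (by linarith) h
    · exact hsymm (-b) (-a) (key1 (-b) (-a) (by linarith) h)

/-- Derivative of `s ↦ |s| ^ q` for `q ≥ 2`. -/
lemma bn_hasDerivAt_abs_rpow {q : ℝ} (hq : 2 ≤ q) (t : ℝ) :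
    HasDerivAt (fun s : ℝ => |s| ^ q) (q * (t * |t| ^ (q - 2))) t := by
  have hq2 : (1:ℝ) ≤ q / 2 := by linarith
  have habs : ∀ s : ℝ, (s ^ 2) ^ (q / 2) = |s| ^ q := by
    intro s
    rw [← sq_abs, ← Real.rpow_natCast |s| 2, ← Real.rpow_mul (abs_nonneg s)]
    congr 1
    push_cast
    ring
  have hsq : HasDerivAt (fun s : ℝ => s ^ 2) (2 * t) t := by
    simpa using hasDerivAt_pow 2 t
  have h := (Real.hasDerivAt_rpow_const (x := t ^ 2) (p := q / 2)
    (Or.inr hq2)).comp t hsq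
  have hval : q / 2 * (t ^ 2) ^ (q / 2 - 1) * (2 * t) = q * (t * |t| ^ (q - 2)) := by
    have : (t ^ 2) ^ (q / 2 - 1) = |t| ^ (q - 2) := by
      rw [← sq_abs, ← Real.rpow_natCast |t| 2, ← Real.rpow_mul (abs_nonneg t)]
      norm_num
      ring_nf
    rw [this]; ring
  have h2 : HasDerivAt (fun s : ℝ => (s ^ 2) ^ (q / 2)) (q * (t * |t| ^ (q - 2))) t := by
    rw [← hval]; exact h
  exact h2.congr_of_eventuallyEq (by filter_upwards with s; rw [habs])

set_option maxHeartbeats 1000000 in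
/-- Main one-sided estimate. -/
lemma bn_main (q : ℝ) (hq1 : 1 ≤ q) (hq3 : q ≤ 3) :
    ∀ x y : ℝ, |y| ≤ |x| →
      |(|x + y| ^ q - |x| ^ q - |y| ^ q - q * x * y * (|x| ^ (q - 2) + |y| ^ (q - 2)))| ≤
        20 * |x| * |y| ^ (q - 1) := by
  intro x y hyx
  by_cases hy : y = 0
  · subst hy
    have h0 : |(0:ℝ)| ^ q = 0 := by
      rw [abs_zero, Real.zero_rpow (by linarith : q ≠ 0)]
    simp only [add_zero, mul_zero, zero_mul, h0, sub_zero, sub_self, abs_zero]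
    rw [Real.zero_rpow (by linarith : q ≠ 0), sub_zero, abs_zero]
    positivity
  have hb : 0 < |y| := abs_pos.2 hy
  have ha : 0 < |x| := lt_of_lt_of_le hb hyx
  have hP : 0 ≤ |x| * |y| ^ (q - 1) :=
    mul_nonneg (abs_nonneg x) (Real.rpow_nonneg (abs_nonneg y) _)
  have hyq : |y| ^ q = |y| ^ (q - 1) * |y| := by
    rw [show q = (q-1) + 1 by ring, Real.rpow_add hb, Real.rpow_one]
    ring_nf
  have hyq2 : |y| ^ (q - 1) = |y| ^ (q - 2) * |y| := by
    rw [show q - 1 = (q-2) + 1 by ring, Real.rpow_add hb, Real.rpow_one]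
  have hb2 : |y| ^ q ≤ |x| * |y| ^ (q - 1) := by
    rw [hyq]
    have := Real.rpow_nonneg (abs_nonneg y) (q - 1)
    nlinarith
  have hb4 : |q * x * y * |y| ^ (q - 2)| ≤ q * (|x| * |y| ^ (q - 1)) := by
    rw [abs_mul, abs_mul, abs_mul, abs_of_nonneg (by linarith : (0:ℝ) ≤ q),
      abs_of_nonneg (Real.rpow_nonneg (abs_nonneg y) _), hyq2]
    ring_nf
    nlinarith [Real.rpow_nonneg (abs_nonneg y) (q-2)]
  have hmax : max |x| |x + y| ≤ 2 * |x| :=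
    max_le (by linarith) (by have := abs_add_le x y; linarith)
  have h2pow : ∀ r : ℝ, 0 ≤ r → r ≤ 1 → ((2:ℝ) * |x|) ^ r ≤ 2 * |x| ^ r := by
    intro r hr0 hr1
    rw [Real.mul_rpow (by norm_num) (abs_nonneg x)]
    have h21 : (2:ℝ) ^ r ≤ 2 ^ (1:ℝ) :=
      Real.rpow_le_rpow_of_exponent_le one_le_two hr1
    rw [Real.rpow_one] at h21
    exact mul_le_mul_of_nonneg_right h21 (Real.rpow_nonneg (abs_nonneg x) r)
  rcases le_total q 2 with hq2 | hq2
  -- low regime : 1 ≤ q ≤ 2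
  · have hfact : |x| ^ (q - 1) * |y| ≤ |x| * |y| ^ (q - 1) := by
      have hxx : |x| ^ (q - 1) = |x| ^ (q - 2) * |x| := by
        rw [show q - 1 = (q-2) + 1 by ring, Real.rpow_add ha, Real.rpow_one]
      have hle : |x| ^ (q - 2) ≤ |y| ^ (q - 2) :=
        Real.rpow_le_rpow_of_nonpos hb hyx (by linarith)
      rw [hxx, hyq2]
      nlinarith [mul_le_mul_of_nonneg_right hle (mul_nonneg ha.le hb.le)]
    have hA1 : |(|x + y| ^ q - |x| ^ q)| ≤ 2 * q * (|x| * |y| ^ (q - 1)) := by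
      have h := bn_rpow_lip hq1 (abs_nonneg x) (abs_nonneg (x + y))
      have habs1 : |(|x + y| - |x|)| ≤ |y| := by
        have := abs_abs_sub_abs_le_abs_sub (x + y) x
        simpa using this
      have hmaxpow : (max |x| |x + y|) ^ (q - 1) ≤ 2 * |x| ^ (q - 1) := by
        calc (max |x| |x + y|) ^ (q - 1) ≤ (2 * |x|) ^ (q - 1) :=
              Real.rpow_le_rpow (le_max_of_le_left (abs_nonneg x)) hmax (by linarith)
          _ ≤ 2 * |x| ^ (q - 1) := h2pow _ (by linarith) (by linarith)
      have hmp : 0 ≤ (max |x| |x + y|) ^ (q - 1) :=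
        Real.rpow_nonneg (le_max_of_le_left (abs_nonneg x)) _
      have h2 : |(|x + y| ^ q - |x| ^ q)| ≤ q * (2 * |x| ^ (q - 1)) * |y| := by
        calc |(|x + y| ^ q - |x| ^ q)|
            ≤ q * (max |x| |x + y|) ^ (q - 1) * |(|x + y| - |x|)| := h
          _ ≤ q * (2 * |x| ^ (q - 1)) * |y| := by
              apply mul_le_mul
              · exact mul_le_mul_of_nonneg_left hmaxpow (by linarith)
              · exact habs1
              · exact abs_nonneg _
              · positivity
      nlinarith
    have hb3 : |q * x * y * |x| ^ (q - 2)| ≤ q * (|x| * |y| ^ (q - 1)) := by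
      rw [abs_mul, abs_mul, abs_mul, abs_of_nonneg (by linarith : (0:ℝ) ≤ q),
        abs_of_nonneg (Real.rpow_nonneg (abs_nonneg x) _)]
      have hxx : |x| ^ (q - 1) = |x| ^ (q - 2) * |x| := by
        rw [show q - 1 = (q-2) + 1 by ring, Real.rpow_add ha, Real.rpow_one]
      have : q * |x| * |y| * |x| ^ (q - 2) = q * (|x| ^ (q - 1) * |y|) := by
        rw [hxx]; ring
      rw [this]
      nlinarith
    have hsplit : |x + y| ^ q - |x| ^ q - |y| ^ q - q * x * y * (|x| ^ (q - 2) + |y| ^ (q - 2))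
        = ((|x + y| ^ q - |x| ^ q) - |y| ^ q - q * x * y * |x| ^ (q - 2))
          - q * x * y * |y| ^ (q - 2) := by ring
    rw [hsplit]
    calc |((|x + y| ^ q - |x| ^ q) - |y| ^ q - q * x * y * |x| ^ (q - 2))
          - q * x * y * |y| ^ (q - 2)|
        ≤ |(|x + y| ^ q - |x| ^ q) - |y| ^ q - q * x * y * |x| ^ (q - 2)|
            + |q * x * y * |y| ^ (q - 2)| := abs_sub _ _
      _ ≤ (|(|x + y| ^ q - |x| ^ q) - |y| ^ q| + |q * x * y * |x| ^ (q - 2)|)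
            + |q * x * y * |y| ^ (q - 2)| := by
          have := abs_sub ((|x + y| ^ q - |x| ^ q) - |y| ^ q) (q * x * y * |x| ^ (q - 2))
          linarith
      _ ≤ ((|(|x + y| ^ q - |x| ^ q)| + |(|y| ^ q)|) + |q * x * y * |x| ^ (q - 2)|)
            + |q * x * y * |y| ^ (q - 2)| := by
          have := abs_sub (|x + y| ^ q - |x| ^ q) (|y| ^ q)
          linarith
      _ ≤ 20 * |x| * |y| ^ (q - 1) := by
          have hyabs : |(|y| ^ q)| = |y| ^ q := abs_of_nonneg (Real.rpow_nonneg (abs_nonneg y) q)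
          rw [hyabs]
          nlinarith
  -- high regime : 2 ≤ q ≤ 3
  · have hD : ∀ t : ℝ, HasDerivAt (fun t : ℝ => |x + t| ^ q - |x| ^ q
        - q * (x * |x| ^ (q - 2)) * t)
        (q * ((x + t) * |x + t| ^ (q - 2)) - q * (x * |x| ^ (q - 2))) t := by
      intro t
      have h1 : HasDerivAt (fun t : ℝ => |x + t| ^ q)
          (q * ((x + t) * |x + t| ^ (q - 2)) * 1) t := by
        have := (bn_hasDerivAt_abs_rpow hq2 (x + t)).comp t
          ((hasDerivAt_id t).const_add x)
        simpa [Function.comp_def] using this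
      have h2 := (h1.sub_const (|x| ^ q)).sub
        ((hasDerivAt_id t).const_mul (q * (x * |x| ^ (q - 2))))
      simpa [Pi.sub_def] using h2
    have hbound : ∀ t ∈ uIcc (0:ℝ) y,
        ‖q * ((x + t) * |x + t| ^ (q - 2)) - q * (x * |x| ^ (q - 2))‖ ≤ (2 * q * (q - 1) * |x| ^ (q - 2) * |y|) := by
      intro t ht
      have htb : |t| ≤ |y| := by
        rcases mem_uIcc.1 ht with ⟨h1, h2⟩ | ⟨h1, h2⟩
        · rw [abs_of_nonneg h1]; exact le_trans h2 (le_abs_self y)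
        · rw [abs_of_nonpos h2]; exact le_trans (by linarith) (neg_abs_le y |>.trans (le_abs_self y) |> fun _ => neg_le_abs y) |>.trans (le_refl _) |>.trans (le_refl _)
      have hgl := bn_g_lip (p := q - 2) (by linarith) (by linarith) (x + t) x
      have hmax2 : max |x + t| |x| ≤ 2 * |x| := by
        have h1 : |x + t| ≤ |x| + |t| := abs_add_le x t
        exact max_le (by linarith) (by linarith)
      have hmp0 : (0:ℝ) ≤ max |x + t| |x| := le_max_of_le_right (abs_nonneg x)
      have hmaxpow : (max |x + t| |x|) ^ (q - 2) ≤ 2 * |x| ^ (q - 2) := by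
        calc (max |x + t| |x|) ^ (q - 2) ≤ (2 * |x|) ^ (q - 2) :=
              Real.rpow_le_rpow hmp0 hmax2 (by linarith)
          _ ≤ 2 * |x| ^ (q - 2) := h2pow _ (by linarith) (by linarith)
      have hsimp : |x + t - x| = |t| := by ring_nf
      rw [hsimp] at hgl
      have heq : q * ((x + t) * |x + t| ^ (q - 2)) - q * (x * |x| ^ (q - 2))
          = q * ((x + t) * |x + t| ^ (q - 2) - x * |x| ^ (q - 2)) := by ring
      rw [Real.norm_eq_abs, heq, abs_mul, abs_of_nonneg (by linarith : (0:ℝ) ≤ q)]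
      have hq1' : (0:ℝ) ≤ q - 1 := by linarith
      have hmp : 0 ≤ (max |x + t| |x|) ^ (q - 2) := Real.rpow_nonneg hmp0 _
      have step : |(x + t) * |x + t| ^ (q - 2) - x * |x| ^ (q - 2)|
          ≤ (q - 1) * (2 * |x| ^ (q - 2)) * |y| := by
        calc |(x + t) * |x + t| ^ (q - 2) - x * |x| ^ (q - 2)|
            ≤ ((q - 2) + 1) * (max |x + t| |x|) ^ (q - 2) * |t| := hgl
          _ ≤ (q - 1) * (2 * |x| ^ (q - 2)) * |y| := by
              have h1 : ((q - 2) + 1) = q - 1 := by ring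
              rw [h1]
              apply mul_le_mul
              · exact mul_le_mul_of_nonneg_left hmaxpow hq1'
              · exact htb
              · exact abs_nonneg t
              · positivity
      nlinarith
    have hMVT := Convex.norm_image_sub_le_of_norm_hasDerivWithin_le
      (f := fun t : ℝ => |x + t| ^ q - |x| ^ q - q * (x * |x| ^ (q - 2)) * t)
      (f' := fun t : ℝ => q * ((x + t) * |x + t| ^ (q - 2)) - q * (x * |x| ^ (q - 2)))
      (s := uIcc (0:ℝ) y) (C := 2 * q * (q - 1) * |x| ^ (q - 2) * |y|)
      (fun t _ => (hD t).hasDerivWithinAt) hbound (convex_uIcc 0 y)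
      left_mem_uIcc right_mem_uIcc
    simp only [Real.norm_eq_abs] at hMVT
    have hpsi0 : |x + 0| ^ q - |x| ^ q - q * (x * |x| ^ (q - 2)) * 0 = 0 := by
      simp
    rw [hpsi0, sub_zero, sub_zero] at hMVT
    have hT : |(|x + y| ^ q - |x| ^ q - q * x * y * |x| ^ (q - 2))| ≤ (2 * q * (q - 1) * |x| ^ (q - 2) * |y|) * |y| := by
      have : |x + y| ^ q - |x| ^ q - q * x * y * |x| ^ (q - 2)
          = |x + y| ^ q - |x| ^ q - q * (x * |x| ^ (q - 2)) * y := by ring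
      rw [this]; exact hMVT
    have hkey : |x| ^ (q - 2) * |y| * |y| ≤ |x| * |y| ^ (q - 1) := by
      have hxx : |x| ^ (q - 2) = |x| * |x| ^ (q - 3) := by
        rw [show q - 2 = 1 + (q - 3) by ring, Real.rpow_add ha, Real.rpow_one]
      have hle : |x| ^ (q - 3) ≤ |y| ^ (q - 3) :=
        Real.rpow_le_rpow_of_nonpos hb hyx (by linarith)
      have hyy : |y| ^ (q - 1) = |y| ^ (q - 3) * |y| * |y| := by
        rw [show q - 1 = (q - 3) + 1 + 1 by ring, Real.rpow_add hb, Real.rpow_add hb,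
          Real.rpow_one]
      rw [hxx, hyy]
      nlinarith [mul_le_mul_of_nonneg_right hle
        (by positivity : (0:ℝ) ≤ |x| * (|y| * |y|))]
    have hTP : |(|x + y| ^ q - |x| ^ q - q * x * y * |x| ^ (q - 2))|
        ≤ 2 * q * (q - 1) * (|x| * |y| ^ (q - 1)) := by
      calc |(|x + y| ^ q - |x| ^ q - q * x * y * |x| ^ (q - 2))|
          ≤ (2 * q * (q - 1) * |x| ^ (q - 2) * |y|) * |y| := hT
        _ = 2 * q * (q - 1) * (|x| ^ (q - 2) * |y| * |y|) := by ring
        _ ≤ 2 * q * (q - 1) * (|x| * |y| ^ (q - 1)) := by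
            apply mul_le_mul_of_nonneg_left hkey
            nlinarith
    have hsplit : |x + y| ^ q - |x| ^ q - |y| ^ q - q * x * y * (|x| ^ (q - 2) + |y| ^ (q - 2))
        = (|x + y| ^ q - |x| ^ q - q * x * y * |x| ^ (q - 2)) - |y| ^ q
          - q * x * y * |y| ^ (q - 2) := by ring
    rw [hsplit]
    calc |(|x + y| ^ q - |x| ^ q - q * x * y * |x| ^ (q - 2)) - |y| ^ q
          - q * x * y * |y| ^ (q - 2)|
        ≤ |(|x + y| ^ q - |x| ^ q - q * x * y * |x| ^ (q - 2)) - |y| ^ q|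
            + |q * x * y * |y| ^ (q - 2)| := abs_sub _ _
      _ ≤ (|(|x + y| ^ q - |x| ^ q - q * x * y * |x| ^ (q - 2))| + |(|y| ^ q)|)
            + |q * x * y * |y| ^ (q - 2)| := by
          have := abs_sub (|x + y| ^ q - |x| ^ q - q * x * y * |x| ^ (q - 2)) (|y| ^ q)
          linarith
      _ ≤ 20 * |x| * |y| ^ (q - 1) := by
          have hyabs : |(|y| ^ q)| = |y| ^ q := abs_of_nonneg (Real.rpow_nonneg (abs_nonneg y) q)
          rw [hyabs]
          have hco : 2*q*(q-1)+1+q ≤ 20 := by nlinarith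
          have hfin := mul_le_mul_of_nonneg_right hco hP
          nlinarith [hTP, hb2, hb4, hfin]

theorem brezis_nirenberg_lemma4_low
    (q : ℝ) (hq1 : 1 ≤ q) (hq3 : q ≤ 3) :
    ∃ C > 0, ∀ x y : ℝ,
      (|x| ≥ |y| →
        |(|x + y| ^ q - |x| ^ q - |y| ^ q - q * x * y * (|x| ^ (q - 2) + |y| ^ (q - 2)))| ≤
          C * |x| * |y| ^ (q - 1)) ∧
      (|x| ≤ |y| →
        |(|x + y| ^ q - |x| ^ q - |y| ^ q - q * x * y * (|x| ^ (q - 2) + |y| ^ (q - 2)))| ≤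
          C * |x| ^ (q - 1) * |y|) := by
  refine ⟨20, by norm_num, fun x y => ⟨fun h => bn_main q hq1 hq3 x y h, fun h => ?_⟩⟩
  have h2 := bn_main q hq1 hq3 y x h
  have hsym : |y + x| ^ q - |y| ^ q - |x| ^ q - q * y * x * (|y| ^ (q - 2) + |x| ^ (q - 2))
      = |x + y| ^ q - |x| ^ q - |y| ^ q - q * x * y * (|x| ^ (q - 2) + |y| ^ (q - 2)) := by
    rw [add_comm y x]; ring
  rw [hsym] at h2
  calc |(|x + y| ^ q - |x| ^ q - |y| ^ q - q * x * y * (|x| ^ (q - 2) + |y| ^ (q - 2)))|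
      ≤ 20 * |y| * |x| ^ (q - 1) := h2
    _ = 20 * |x| ^ (q - 1) * |y| := by ring
end

section
/- Let q > 3. There exists a constant C = C(q) > 0 such that for all real x, y: | |x+y|^q − |x|^q − |y|^q − q·x·y·(|x|^{q−2} + |y|^{q−2}) | ≤ C·( |x|^{q−2}·y² + x²·|y|^{q−2} ). -/
open Real

private lemma bn_phi_hasDerivAt {q : ℝ} (hq : 3 < q) (s : ℝ) :
    HasDerivAt (fun t : ℝ => |t| ^ (q - 2) * t) ((q - 1) * |s| ^ (q - 2)) s := by
  have h1 : (1:ℝ) < q - 2 := by linarith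
  have h := (hasDerivAt_abs_rpow s h1).mul (hasDerivAt_id s)
  convert (show HasDerivAt (fun t : ℝ => |t| ^ (q - 2) * t) _ s from h) using 1
  simp only [id_eq, mul_one]
  rcases eq_or_ne s 0 with rfl | hs
  · simp [Real.zero_rpow (show q - 2 ≠ 0 by linarith)]
  · have habs : (0:ℝ) < |s| := abs_pos.mpr hs
    have e1 : s * s = |s| ^ ((2:ℕ):ℝ) := by
      rw [Real.rpow_natCast, sq_abs, sq]
    have e2 : |s| ^ (q - 2 - 2) * |s| ^ ((2:ℕ):ℝ) = |s| ^ (q - 2) := by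
      rw [← Real.rpow_add habs]; norm_num
    calc (q - 1) * |s| ^ (q - 2)
        = (q - 2) * (|s| ^ (q - 2 - 2) * |s| ^ ((2:ℕ):ℝ)) + |s| ^ (q - 2) := by
          rw [e2]; ring
      _ = (q - 2) * |s| ^ (q - 2 - 2) * s * s + |s| ^ (q - 2) := by
          rw [← e1]; ring

private lemma bn_phi_lip {q : ℝ} (hq : 3 < q) {M a b : ℝ} (hM : 0 ≤ M)
    (ha : |a| ≤ M) (hb : |b| ≤ M) :
    |(|b| ^ (q - 2) * b) - (|a| ^ (q - 2) * a)| ≤ (q - 1) * M ^ (q - 2) * |b - a| := by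
  have hbound : ∀ t ∈ Set.Icc (-M) M,
      ‖(q - 1) * |t| ^ (q - 2)‖ ≤ (q - 1) * M ^ (q - 2) := by
    intro t ht
    rw [Real.norm_eq_abs]
    have ht' : |t| ≤ M := abs_le.mpr ht
    have h1 : |t| ^ (q - 2) ≤ M ^ (q - 2) :=
      Real.rpow_le_rpow (abs_nonneg t) ht' (by linarith)
    have h2 : (0:ℝ) ≤ |t| ^ (q - 2) := Real.rpow_nonneg (abs_nonneg t) _
    rw [abs_of_nonneg (by nlinarith)]
    nlinarith
  have key := Convex.norm_image_sub_le_of_norm_hasDerivWithin_le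
    (f := fun t : ℝ => |t| ^ (q - 2) * t) (f' := fun t : ℝ => (q - 1) * |t| ^ (q - 2))
    (s := Set.Icc (-M) M) (x := a) (y := b)
    (fun t _ => (bn_phi_hasDerivAt hq t).hasDerivWithinAt)
    hbound (convex_Icc _ _) (abs_le.mp ha) (abs_le.mp hb)
  simpa [Real.norm_eq_abs] using key

private lemma bn_taylor {q : ℝ} (hq : 3 < q) (x y : ℝ) (h : |y| ≤ |x|) :
    |(|x + y| ^ q - |x| ^ q - q * (|x| ^ (q - 2) * x) * y)| ≤
      q * (q - 1) * 2 ^ (q - 2) * (|x| ^ (q - 2) * y ^ 2) := by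
  have hq1 : (1:ℝ) < q := by linarith
  set C : ℝ := q * (q - 1) * 2 ^ (q - 2) * |x| ^ (q - 2) * |y| with hC
  have hg : ∀ t : ℝ, HasDerivAt (fun t : ℝ => |x + t| ^ q - |x| ^ q - q * (|x| ^ (q - 2) * x) * t)
      (q * (|x + t| ^ (q - 2) * (x + t)) - q * (|x| ^ (q - 2) * x)) t := by
    intro t
    have h1 : HasDerivAt (fun t : ℝ => |x + t| ^ q) (q * |x + t| ^ (q - 2) * (x + t) * 1) t :=
      (hasDerivAt_abs_rpow (x + t) hq1).comp t ((hasDerivAt_id t).const_add x)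
    have h2 : HasDerivAt (fun t : ℝ => q * (|x| ^ (q - 2) * x) * t)
        (q * (|x| ^ (q - 2) * x)) t := by
      simpa using (hasDerivAt_id t).const_mul (q * (|x| ^ (q - 2) * x))
    convert (show HasDerivAt (fun t : ℝ => |x + t| ^ q - |x| ^ q - q * (|x| ^ (q - 2) * x) * t) _ t
      from (h1.sub_const (|x| ^ q)).sub h2) using 1
    ring
  have hbound : ∀ t ∈ Set.Icc (-|y|) |y|,
      ‖q * (|x + t| ^ (q - 2) * (x + t)) - q * (|x| ^ (q - 2) * x)‖ ≤ C := by
    intro t ht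
    rw [Real.norm_eq_abs]
    have ht' : |t| ≤ |y| := abs_le.mpr ht
    have hxt : |x + t| ≤ 2 * |x| := by
      calc |x + t| ≤ |x| + |t| := abs_add_le _ _
        _ ≤ 2 * |x| := by nlinarith [abs_nonneg x]
    have hx2 : |x| ≤ 2 * |x| := by nlinarith [abs_nonneg x]
    have lip := bn_phi_lip hq (M := 2 * |x|) (a := x) (b := x + t)
      (by positivity) hx2 hxt
    have e3 : (2 * |x|) ^ (q - 2) = 2 ^ (q - 2) * |x| ^ (q - 2) :=
      Real.mul_rpow (by norm_num) (abs_nonneg x)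
    have e4 : |q * (|x + t| ^ (q - 2) * (x + t)) - q * (|x| ^ (q - 2) * x)|
        = q * |(|x + t| ^ (q - 2) * (x + t)) - (|x| ^ (q - 2) * x)| := by
      rw [← mul_sub, abs_mul, abs_of_pos (by linarith : (0:ℝ) < q)]
    have e5 : |x + t - x| = |t| := by congr 1; ring
    rw [e3, e5] at lip
    rw [e4, hC]
    have h2pos : (0:ℝ) < 2 ^ (q - 2) := Real.rpow_pos_of_pos (by norm_num) _
    have hxnn : (0:ℝ) ≤ |x| ^ (q - 2) := Real.rpow_nonneg (abs_nonneg x) _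
    have s1 := mul_le_mul_of_nonneg_left lip (show (0:ℝ) ≤ q by linarith)
    have hf : (0:ℝ) ≤ q * ((q - 1) * (2 ^ (q - 2) * |x| ^ (q - 2))) :=
      mul_nonneg (by linarith) (mul_nonneg (by linarith) (mul_nonneg h2pos.le hxnn))
    have s2 := mul_le_mul_of_nonneg_left ht' hf
    nlinarith [s1, s2]
  have key := Convex.norm_image_sub_le_of_norm_hasDerivWithin_le
    (f := fun t : ℝ => |x + t| ^ q - |x| ^ q - q * (|x| ^ (q - 2) * x) * t)
    (f' := fun t : ℝ => q * (|x + t| ^ (q - 2) * (x + t)) - q * (|x| ^ (q - 2) * x))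
    (s := Set.Icc (-|y|) |y|) (x := 0) (y := y)
    (fun t _ => (hg t).hasDerivWithinAt)
    hbound (convex_Icc _ _)
    (Set.mem_Icc.mpr ⟨neg_nonpos.mpr (abs_nonneg y), abs_nonneg y⟩)
    (Set.mem_Icc.mpr ⟨neg_abs_le y, le_abs_self y⟩)
  rw [Real.norm_eq_abs, Real.norm_eq_abs, sub_zero] at key
  simp only [add_zero, mul_zero, sub_zero, sub_self] at key
  calc |(|x + y| ^ q - |x| ^ q - q * (|x| ^ (q - 2) * x) * y)| ≤ C * |y| := key
    _ = q * (q - 1) * 2 ^ (q - 2) * (|x| ^ (q - 2) * y ^ 2) := by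
        rw [hC, show |x| ^ (q-2) * y ^ 2 = |x| ^ (q-2) * (|y| * |y|) from by
          rw [abs_mul_abs_self]; ring]
        ring

private lemma bn_half {q : ℝ} (hq : 3 < q) {x y : ℝ} (h : |y| ≤ |x|) :
    |(|x + y| ^ q - |x| ^ q - |y| ^ q - q * x * y * (|x| ^ (q - 2) + |y| ^ (q - 2)))| ≤
      (q * (q - 1) * 2 ^ (q - 2) + 1 + q) * (|x| ^ (q - 2) * y ^ 2) := by
  have hA : (0:ℝ) ≤ |x| := abs_nonneg x
  have hB : (0:ℝ) ≤ |y| := abs_nonneg y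
  have hP3 : |y| ^ (q - 3) ≤ |x| ^ (q - 3) := Real.rpow_le_rpow hB h (by linarith)
  have hPn : (0:ℝ) ≤ |y| ^ (q - 3) := Real.rpow_nonneg hB _
  -- |y|^q = |y|^(q-2) * y^2
  have eyq : |y| ^ q = |y| ^ (q - 2) * y ^ 2 := by
    have := Real.rpow_add' (x := |y|) hB (show (q - 2) + ((2:ℕ):ℝ) ≠ 0 by push_cast; linarith)
    rw [show (q - 2) + ((2:ℕ):ℝ) = q by push_cast; ring] at this
    rw [this, Real.rpow_natCast, sq_abs]
  -- |y|^(q-2) = |y|^(q-3) * |y|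
  have eym : |y| ^ (q - 2) = |y| ^ (q - 3) * |y| := by
    have := Real.rpow_add' (x := |y|) hB (show (q - 3) + (1:ℝ) ≠ 0 by linarith)
    rw [show (q - 3) + (1:ℝ) = q - 2 by ring] at this
    rw [this, Real.rpow_one]
  have exm : |x| ^ (q - 2) = |x| ^ (q - 3) * |x| := by
    have := Real.rpow_add' (x := |x|) hA (show (q - 3) + (1:ℝ) ≠ 0 by linarith)
    rw [show (q - 3) + (1:ℝ) = q - 2 by ring] at this
    rw [this, Real.rpow_one]
  have hyx : |y| ^ (q - 2) ≤ |x| ^ (q - 2) := Real.rpow_le_rpow hB h (by linarith)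
  have htay := bn_taylor hq x y h
  -- second term bound: |y|^q ≤ |x|^(q-2) * y^2
  have h2 : |y| ^ q ≤ |x| ^ (q - 2) * y ^ 2 := by
    rw [eyq]; exact mul_le_mul_of_nonneg_right hyx (sq_nonneg y)
  -- third term bound
  have h3 : |q * x * y * |y| ^ (q - 2)| ≤ q * (|x| ^ (q - 2) * y ^ 2) := by
    have : |q * x * y * |y| ^ (q - 2)| = q * |x| * |y| * |y| ^ (q - 2) := by
      rw [abs_mul, abs_mul, abs_mul, abs_of_pos (by linarith : (0:ℝ) < q),
        abs_of_nonneg (Real.rpow_nonneg hB _)]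
    have hy2 : y ^ 2 = |y| * |y| := by rw [abs_mul_abs_self]; ring
    rw [this, eym, exm, hy2]
    nlinarith [mul_le_mul_of_nonneg_left hP3
      (mul_nonneg (mul_nonneg (show (0:ℝ) ≤ q by linarith) hA) (mul_nonneg hB hB))]
  have eqq : |x + y| ^ q - |x| ^ q - |y| ^ q - q * x * y * (|x| ^ (q - 2) + |y| ^ (q - 2))
      = (|x + y| ^ q - |x| ^ q - q * (|x| ^ (q - 2) * x) * y)
        + (-(|y| ^ q)) + (-(q * x * y * |y| ^ (q - 2))) := by ring
  rw [eqq]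
  calc |(|x + y| ^ q - |x| ^ q - q * (|x| ^ (q - 2) * x) * y)
        + (-(|y| ^ q)) + (-(q * x * y * |y| ^ (q - 2)))|
      ≤ |(|x + y| ^ q - |x| ^ q - q * (|x| ^ (q - 2) * x) * y)|
        + |(-(|y| ^ q))| + |(-(q * x * y * |y| ^ (q - 2)))| := abs_add_three _ _ _
    _ ≤ q * (q - 1) * 2 ^ (q - 2) * (|x| ^ (q - 2) * y ^ 2)
        + |x| ^ (q - 2) * y ^ 2 + q * (|x| ^ (q - 2) * y ^ 2) := by
        refine add_le_add (add_le_add htay ?_) ?_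
        · rw [abs_neg, abs_of_nonneg (Real.rpow_nonneg hB _)]; exact h2
        · rw [abs_neg]; exact h3
    _ = (q * (q - 1) * 2 ^ (q - 2) + 1 + q) * (|x| ^ (q - 2) * y ^ 2) := by ring

theorem brezis_nirenberg_lemma4_high
    (q : ℝ) (hq : 3 < q) :
    ∃ C > 0, ∀ x y : ℝ,
      |(|x + y| ^ q - |x| ^ q - |y| ^ q - q * x * y * (|x| ^ (q - 2) + |y| ^ (q - 2)))| ≤
        C * (|x| ^ (q - 2) * y ^ 2 + x ^ 2 * |y| ^ (q - 2)) := by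
  have h2pos : (0:ℝ) < 2 ^ (q - 2) := Real.rpow_pos_of_pos (by norm_num) _
  have hqq : (0:ℝ) < q * (q - 1) := by nlinarith
  have hprod : (0:ℝ) < q * (q - 1) * 2 ^ (q - 2) := mul_pos hqq h2pos
  refine ⟨q * (q - 1) * 2 ^ (q - 2) + 1 + q, by linarith, fun x y => ?_⟩
  set C : ℝ := q * (q - 1) * 2 ^ (q - 2) + 1 + q with hC
  have hCpos : (0:ℝ) < C := by rw [hC]; linarith
  have hxnn : (0:ℝ) ≤ |x| ^ (q - 2) := Real.rpow_nonneg (abs_nonneg x) _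
  have hynn : (0:ℝ) ≤ |y| ^ (q - 2) := Real.rpow_nonneg (abs_nonneg y) _
  rcases le_total |y| |x| with h | h
  · calc |(|x + y| ^ q - |x| ^ q - |y| ^ q - q * x * y * (|x| ^ (q - 2) + |y| ^ (q - 2)))|
        ≤ C * (|x| ^ (q - 2) * y ^ 2) := bn_half hq h
      _ ≤ C * (|x| ^ (q - 2) * y ^ 2 + x ^ 2 * |y| ^ (q - 2)) := by
          nlinarith [mul_nonneg (mul_nonneg hCpos.le (sq_nonneg x)) hynn]
  · have key := bn_half hq (x := y) (y := x) h
    have esym : |x + y| ^ q - |x| ^ q - |y| ^ q - q * x * y * (|x| ^ (q - 2) + |y| ^ (q - 2))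
        = |y + x| ^ q - |y| ^ q - |x| ^ q - q * y * x * (|y| ^ (q - 2) + |x| ^ (q - 2)) := by
      rw [add_comm x y]; ring
    rw [esym]
    calc |(|y + x| ^ q - |y| ^ q - |x| ^ q - q * y * x * (|y| ^ (q - 2) + |x| ^ (q - 2)))|
        ≤ C * (|y| ^ (q - 2) * x ^ 2) := key
      _ ≤ C * (|x| ^ (q - 2) * y ^ 2 + x ^ 2 * |y| ^ (q - 2)) := by
          nlinarith [mul_nonneg (mul_nonneg hCpos.le hxnn) (sq_nonneg y)]
end
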